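/- arXiv:2401.11726 — 3 statements merged into one kernel-verified Lean document; each statement's English description precedes it below -/
import Mathlib

section
/- As the regularization coefficient λ → +∞, the minimizer P_λ of the entropic regularized OT problem converges to the product measure μ ⊗ ν. -/
/-!
Put `Q = μ νᵀ`. Since `P_λ` and `Q` have the same marginals, `∑ P_λ log Q = ∑ Q log Q`, so the
entropy gap `E(Q) - E(P_λ)` is the Kullback–Leibler divergence of `P_λ` from `Q`. Minimality of
`P_λ` against the competitor `Q` bounds `λ (E(Q) - E(P_λ))` by the cost difference, hence by
`2 ∑ |C|`. Comparing each summand of the divergence with a squared Hellinger term gives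
`(P_λ i j - μ i ν j)² ≤ 4 (E(Q) - E(P_λ)) ≤ 8 ∑ |C| / λ`.
-/

open Real Filter Finset Matrix

lemma sq_sqrt_sub_sqrt_le_mul_log_sub {p q : ℝ} (hp : 0 < p) (hq : 0 ≤ q) :
    (√q - √p) ^ 2 ≤ q * log q - q * log p - q + p := by
  rcases hq.eq_or_lt with rfl | hq
  · simp [sq_sqrt hp.le]
  obtain ⟨a, ha, rfl⟩ : ∃ a, 0 < a ∧ p = a ^ 2 := ⟨√p, sqrt_pos.2 hp, (sq_sqrt hp.le).symm⟩
  obtain ⟨b, hb, rfl⟩ : ∃ b, 0 < b ∧ q = b ^ 2 := ⟨√q, sqrt_pos.2 hq, (sq_sqrt hq.le).symm⟩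
  have hlog : log a - log b ≤ a / b - 1 := by
    rw [← log_div ha.ne' hb.ne']
    exact log_le_sub_one_of_pos (div_pos ha hb)
  have hmul : b ^ 2 * (log a - log b) ≤ a * b - b ^ 2 := by
    calc b ^ 2 * (log a - log b) ≤ b ^ 2 * (a / b - 1) := by gcongr
      _ = a * b - b ^ 2 := by field_simp
  rw [sqrt_sq ha.le, sqrt_sq hb.le, log_pow, log_pow]
  push_cast
  linarith

lemma sq_sub_le_four_mul_mul_log_sub {p q : ℝ} (hp : 0 < p) (hp1 : p ≤ 1) (hq : 0 ≤ q)
    (hq1 : q ≤ 1) : (q - p) ^ 2 ≤ 4 * (q * log q - q * log p - q + p) := by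
  have hsum : (√q + √p) ^ 2 ≤ 4 := by
    have := sqrt_le_one.2 hp1
    have := sqrt_le_one.2 hq1
    nlinarith [sqrt_nonneg p, sqrt_nonneg q]
  calc (q - p) ^ 2 = (√q + √p) ^ 2 * (√q - √p) ^ 2 := by
        rw [← mul_pow, ← sq_sub_sq, sq_sqrt hq, sq_sqrt hp.le]
    _ ≤ 4 * (q * log q - q * log p - q + p) := by
        gcongr
        exact sq_sqrt_sub_sqrt_le_mul_log_sub hp hq

lemma tendsto_of_sq_sub_le_div {f : ℝ → ℝ} {a c : ℝ}
    (h : ∀ᶠ x in atTop, (f x - a) ^ 2 ≤ c / x) : Tendsto f atTop (nhds a) := by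
  rw [tendsto_iff_norm_sub_tendsto_zero]
  have hc : Tendsto (fun x : ℝ => √(c / x)) atTop (nhds 0) := by
    simpa using (tendsto_const_nhds.div_atTop tendsto_id).sqrt
  exact squeeze_zero' (.of_forall fun _ => norm_nonneg _)
    (h.mono fun _ hx => abs_le_sqrt hx) hc

section Coupling

variable {ι κ : Type*} [Fintype ι] [Fintype κ]

def IsCoupling (μ : ι → ℝ) (ν : κ → ℝ) (Q : Matrix ι κ ℝ) : Prop :=
  (∀ i j, 0 ≤ Q i j) ∧ (∀ i, ∑ j, Q i j = μ i) ∧ (∀ j, ∑ i, Q i j = ν j)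

def transportCost (C Q : Matrix ι κ ℝ) : ℝ :=
  ∑ i, ∑ j, C i j * Q i j

noncomputable def entropy (Q : Matrix ι κ ℝ) : ℝ :=
  -∑ i, ∑ j, Q i j * (log (Q i j) - 1)

lemma abs_transportCost_le (C : Matrix ι κ ℝ) {Q : Matrix ι κ ℝ} (hQ0 : ∀ i j, 0 ≤ Q i j)
    (hQ1 : ∀ i j, Q i j ≤ 1) : |transportCost C Q| ≤ ∑ i, ∑ j, |C i j| := by
  unfold transportCost
  refine (abs_sum_le_sum_abs _ _).trans (sum_le_sum fun i _ => ?_)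
  refine (abs_sum_le_sum_abs _ _).trans (sum_le_sum fun j _ => ?_)
  rw [abs_mul, abs_of_nonneg (hQ0 i j)]
  exact mul_le_of_le_one_right (abs_nonneg _) (hQ1 i j)

variable {μ : ι → ℝ} {ν : κ → ℝ}

lemma isCoupling_vecMulVec (hμ : ∀ i, 0 ≤ μ i) (hν : ∀ j, 0 ≤ ν j) (hμ1 : ∑ i, μ i = 1)
    (hν1 : ∑ j, ν j = 1) : IsCoupling μ ν (vecMulVec μ ν) := by
  refine ⟨fun i j => mul_nonneg (hμ i) (hν j), fun i => ?_, fun j => ?_⟩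
  · simp only [vecMulVec_apply, ← mul_sum, hν1, mul_one]
  · simp only [vecMulVec_apply, ← sum_mul, hμ1, one_mul]

namespace IsCoupling

variable {Q : Matrix ι κ ℝ}

lemma le_one (hQ : IsCoupling μ ν Q) (hμ1 : ∑ i, μ i = 1) (i : ι) (j : κ) : Q i j ≤ 1 := by
  obtain ⟨hQ0, hrow, -⟩ := hQ
  have hμ : ∀ k, 0 ≤ μ k := fun k => hrow k ▸ sum_nonneg fun l _ => hQ0 k l
  calc Q i j ≤ ∑ l, Q i l := single_le_sum (fun l _ => hQ0 i l) (mem_univ j)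
    _ = μ i := hrow i
    _ ≤ ∑ k, μ k := single_le_sum (fun k _ => hμ k) (mem_univ i)
    _ = 1 := hμ1

lemma sum_mul_log_vecMulVec (hQ : IsCoupling μ ν Q) (hμ : ∀ i, 0 < μ i) (hν : ∀ j, 0 < ν j) :
    ∑ i, ∑ j, Q i j * log (vecMulVec μ ν i j)
      = ∑ i, μ i * log (μ i) + ∑ j, ν j * log (ν j) := by
  obtain ⟨-, hrow, hcol⟩ := hQ
  simp only [vecMulVec_apply, log_mul (hμ _).ne' (hν _).ne', mul_add, sum_add_distrib]
  congr 1
  · exact sum_congr rfl fun i _ => by rw [← sum_mul, hrow]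
  · rw [sum_comm]
    exact sum_congr rfl fun j _ => by rw [← sum_mul, hcol]

lemma entropy_vecMulVec_sub_entropy (hP : IsCoupling μ ν Q) (hμ : ∀ i, 0 < μ i)
    (hν : ∀ j, 0 < ν j) (hμ1 : ∑ i, μ i = 1) (hν1 : ∑ j, ν j = 1) :
    entropy (vecMulVec μ ν) - entropy Q
      = ∑ i, ∑ j, (Q i j * log (Q i j) - Q i j * log (vecMulVec μ ν i j) - Q i j
          + vecMulVec μ ν i j) := by
  have hprod := isCoupling_vecMulVec (fun i => (hμ i).le) (fun j => (hν j).le) hμ1 hν1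
  have hP' := hP.sum_mul_log_vecMulVec hμ hν
  have hprod' := hprod.sum_mul_log_vecMulVec hμ hν
  simp only [entropy, mul_sub, mul_one, sum_sub_distrib, sum_add_distrib] at hP' hprod' ⊢
  linarith

lemma sq_sub_le_four_mul_entropy_sub (hP : IsCoupling μ ν Q) (hμ : ∀ i, 0 < μ i)
    (hν : ∀ j, 0 < ν j) (hμ1 : ∑ i, μ i = 1) (hν1 : ∑ j, ν j = 1) (i : ι) (j : κ) :
    (Q i j - μ i * ν j) ^ 2 ≤ 4 * (entropy (vecMulVec μ ν) - entropy Q) := by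
  have hprod := isCoupling_vecMulVec (fun i => (hμ i).le) (fun j => (hν j).le) hμ1 hν1
  set D : ι → κ → ℝ := fun i j =>
    Q i j * log (Q i j) - Q i j * log (vecMulVec μ ν i j) - Q i j + vecMulVec μ ν i j
  have hD : ∀ i j, (Q i j - vecMulVec μ ν i j) ^ 2 ≤ 4 * D i j := fun i j =>
    sq_sub_le_four_mul_mul_log_sub (mul_pos (hμ i) (hν j)) (hprod.le_one hμ1 i j) (hP.1 i j)
      (hP.le_one hμ1 i j)
  have hD0 : ∀ i j, 0 ≤ D i j := fun i j => by
    linarith [hD i j, sq_nonneg (Q i j - vecMulVec μ ν i j)]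
  rw [hP.entropy_vecMulVec_sub_entropy hμ hν hμ1 hν1]
  calc (Q i j - μ i * ν j) ^ 2 ≤ 4 * D i j := hD i j
    _ ≤ 4 * ∑ i, ∑ j, D i j := by
        gcongr
        calc D i j ≤ ∑ l, D i l := single_le_sum (fun l _ => hD0 i l) (mem_univ j)
          _ ≤ ∑ k, ∑ l, D k l :=
            single_le_sum (f := fun k => ∑ l, D k l) (fun k _ => sum_nonneg fun l _ => hD0 k l)
              (mem_univ i)

end IsCoupling

end Coupling

/-- As λ → +∞, the minimizer of the entropic regularized OT problem
converges entrywise to the product coupling `μ νᵀ`. -/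
theorem entropic_ot_tendsto_product (n m : ℕ) (μ : Fin n → ℝ) (ν : Fin m → ℝ)
    (hμ : ∀ i, 0 < μ i) (hν : ∀ j, 0 < ν j)
    (hμ1 : ∑ i, μ i = 1) (hν1 : ∑ j, ν j = 1)
    (C : Matrix (Fin n) (Fin m) ℝ)
    (P : ℝ → Matrix (Fin n) (Fin m) ℝ)
    (hfeas : ∀ lam : ℝ, 0 < lam →
      (∀ i j, 0 ≤ P lam i j) ∧ (∀ i, ∑ j, P lam i j = μ i) ∧
      (∀ j, ∑ i, P lam i j = ν j))
    (hmin : ∀ lam : ℝ, 0 < lam → ∀ Q : Matrix (Fin n) (Fin m) ℝ,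
      (∀ i j, 0 ≤ Q i j) → (∀ i, ∑ j, Q i j = μ i) → (∀ j, ∑ i, Q i j = ν j) →
      (∑ i, ∑ j, C i j * P lam i j)
          - lam * (-∑ i, ∑ j, P lam i j * (Real.log (P lam i j) - 1))
        ≤ (∑ i, ∑ j, C i j * Q i j)
          - lam * (-∑ i, ∑ j, Q i j * (Real.log (Q i j) - 1))) :
    ∀ i j, Filter.Tendsto (fun lam => P lam i j) Filter.atTop (nhds (μ i * ν j)) := by
  intro i j
  have hQ := isCoupling_vecMulVec (fun i => (hμ i).le) (fun j => (hν j).le) hμ1 hν1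
  set B := ∑ i, ∑ j, |C i j|
  refine tendsto_of_sq_sub_le_div (c := 8 * B) ?_
  filter_upwards [eventually_gt_atTop 0] with lam hlam
  have hP : IsCoupling μ ν (P lam) := hfeas lam hlam
  have hopt : transportCost C (P lam) - lam * entropy (P lam)
      ≤ transportCost C (vecMulVec μ ν) - lam * entropy (vecMulVec μ ν) :=
    hmin lam hlam _ hQ.1 hQ.2.1 hQ.2.2
  have hcostP := abs_le.1 (abs_transportCost_le C hP.1 (hP.le_one hμ1))
  have hcostQ := abs_le.1 (abs_transportCost_le C hQ.1 (hQ.le_one hμ1))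
  have hdev := hP.sq_sub_le_four_mul_entropy_sub hμ hν hμ1 hν1 i j
  have hgap : lam * (entropy (vecMulVec μ ν) - entropy (P lam)) ≤ 2 * B := by linarith
  rw [le_div_iff₀' hlam]
  calc lam * (P lam i j - μ i * ν j) ^ 2
      ≤ lam * (4 * (entropy (vecMulVec μ ν) - entropy (P lam))) := by gcongr
    _ ≤ 8 * B := by linarith
end

section
/- As λ → +∞, the conditional distribution entropy H(U|V=v) of the optimal entropic transport plan with uniform first marginal converges to log n. -/
open Real Filter Finset

private lemma aux_term (x q : ℝ) (hx : 0 ≤ x) (hq : 0 < q) :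
    x * (Real.log q - Real.log x) ≤ q - x := by
  rcases hx.eq_or_lt with h | h
  · simp [← h, hq.le]
  · have h1 : Real.log (q / x) ≤ q / x - 1 :=
      Real.log_le_sub_one_of_pos (div_pos hq h)
    rw [Real.log_div hq.ne' h.ne'] at h1
    have h2 : x * (Real.log q - Real.log x) ≤ x * (q / x - 1) :=
      mul_le_mul_of_nonneg_left h1 h.le
    have h3 : x * (q / x - 1) = q - x := by field_simp
    linarith

private lemma D_nonneg {n : ℕ} (x : Fin n → ℝ) (hx : ∀ u, 0 ≤ x u) (q : ℝ) (hq : 0 < q)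
    (hs : ∑ u, x u = n * q) :
    0 ≤ ∑ u, x u * (Real.log (x u) - Real.log q) := by
  have h : ∑ u, x u * (Real.log q - Real.log (x u)) ≤ ∑ u : Fin n, (q - x u) :=
    Finset.sum_le_sum fun u _ => aux_term (x u) q (hx u) hq
  have h2 : ∑ u : Fin n, (q - x u) = 0 := by
    rw [Finset.sum_sub_distrib, hs]; simp [mul_comm]
  have h3 : ∑ u, x u * (Real.log q - Real.log (x u))
      = -∑ u, x u * (Real.log (x u) - Real.log q) := by
    rw [← Finset.sum_neg_distrib]
    exact Finset.sum_congr rfl fun u _ => by ring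
  rw [h3, h2] at h
  linarith

private lemma entropy_eq {n : ℕ} (hn : 0 < n) (x : Fin n → ℝ) (hx : ∀ u, 0 ≤ x u)
    (s : ℝ) (hs : 0 < s) (hsum : ∑ u, x u = s) :
    -∑ u, (x u / s) * Real.log (x u / s)
      = Real.log n - (∑ u, x u * (Real.log (x u) - Real.log (s / n))) / s := by
  have hnR : (0:ℝ) < n := Nat.cast_pos.mpr hn
  have hterm : ∀ u : Fin n,
      -((x u / s) * Real.log (x u / s))
        = (x u / s) * Real.log n - (x u * (Real.log (x u) - Real.log (s / n))) / s := by
    intro u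
    rcases (hx u).eq_or_lt with h | h
    · simp [← h]
    · have hlog1 : Real.log (x u / s) = Real.log (x u) - Real.log s :=
        Real.log_div h.ne' hs.ne'
      have hlog2 : Real.log (s / n) = Real.log s - Real.log n :=
        Real.log_div hs.ne' hnR.ne'
      rw [hlog1, hlog2]
      field_simp
      ring
  calc -∑ u, (x u / s) * Real.log (x u / s)
      = ∑ u, ((x u / s) * Real.log n - (x u * (Real.log (x u) - Real.log (s / n))) / s) := by
        rw [← Finset.sum_neg_distrib]; exact Finset.sum_congr rfl fun u _ => hterm u
    _ = (∑ u, x u / s) * Real.log n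
        - (∑ u, x u * (Real.log (x u) - Real.log (s / n))) / s := by
        rw [Finset.sum_sub_distrib, ← Finset.sum_mul, ← Finset.sum_div, ← Finset.sum_div]
    _ = Real.log n - (∑ u, x u * (Real.log (x u) - Real.log (s / n))) / s := by
        rw [← Finset.sum_div, hsum, div_self hs.ne', one_mul]

/-- As λ → +∞, the conditional distribution entropy `H(U|V=v)` of the
optimal entropic transport plan with uniform first marginal converges to `log n`. -/
theorem condDistEntropy_tendsto_log (n m : ℕ) (hn : 0 < n)
    (μ : Fin n → ℝ) (hμ : ∀ i, μ i = 1 / (n : ℝ))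
    (ν : Fin m → ℝ) (hν : ∀ j, 0 < ν j) (hν1 : ∑ j, ν j = 1)
    (C : Matrix (Fin n) (Fin m) ℝ)
    (P : ℝ → Matrix (Fin n) (Fin m) ℝ)
    (hfeas : ∀ lam : ℝ, 0 < lam →
      (∀ i j, 0 ≤ P lam i j) ∧ (∀ i, ∑ j, P lam i j = μ i) ∧
      (∀ j, ∑ i, P lam i j = ν j))
    (hmin : ∀ lam : ℝ, 0 < lam → ∀ Q : Matrix (Fin n) (Fin m) ℝ,
      (∀ i j, 0 ≤ Q i j) → (∀ i, ∑ j, Q i j = μ i) → (∀ j, ∑ i, Q i j = ν j) →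
      (∑ i, ∑ j, C i j * P lam i j)
          - lam * (-∑ i, ∑ j, P lam i j * (Real.log (P lam i j) - 1))
        ≤ (∑ i, ∑ j, C i j * Q i j)
          - lam * (-∑ i, ∑ j, Q i j * (Real.log (Q i j) - 1))) :
    ∀ v : Fin m, Filter.Tendsto
      (fun lam => -∑ u, (P lam u v / ν v) * Real.log (P lam u v / ν v))
      Filter.atTop (nhds (Real.log (n : ℝ))) := by
  intro v
  have hnR : (0:ℝ) < n := Nat.cast_pos.mpr hn
  have hs : 0 < ν v := hν v
  set s : ℝ := ν v with hsdef
  -- the independent coupling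
  set Q : Matrix (Fin n) (Fin m) ℝ := fun _ j => ν j / n with hQdef
  have hQ0 : ∀ i j, 0 ≤ Q i j := fun i j => div_nonneg (hν j).le hnR.le
  have hQrow : ∀ i : Fin n, ∑ j, Q i j = μ i := by
    intro i
    rw [hμ i]
    simp only [hQdef]
    rw [← Finset.sum_div, hν1]
  have hQcol : ∀ j : Fin m, ∑ i : Fin n, Q i j = ν j := by
    intro j
    simp only [hQdef]
    rw [Finset.sum_const, Finset.card_univ, Fintype.card_fin, nsmul_eq_mul]
    field_simp
  have hνle1 : ∀ j, ν j ≤ 1 := by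
    intro j
    rw [← hν1]
    exact Finset.single_le_sum (fun j' _ => (hν j').le) (Finset.mem_univ j)
  have hQle1 : ∀ i j, Q i j ≤ 1 := by
    intro i j
    have h1 : Q i j ≤ ν j :=
      div_le_self (hν j).le (by exact_mod_cast hn)
    linarith [hνle1 j]
  set S : ℝ := ∑ i, ∑ j, |C i j| with hSdef
  have hS0 : 0 ≤ S :=
    Finset.sum_nonneg fun i _ => Finset.sum_nonneg fun j _ => abs_nonneg _
  set D : ℝ → ℝ :=
    fun lam => ∑ u, P lam u v * (Real.log (P lam u v) - Real.log (ν v / n)) with hDdef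
  -- key bounds on D
  have key : ∀ lam : ℝ, 0 < lam → 0 ≤ D lam ∧ D lam ≤ 2 * S / lam := by
    intro lam hlam
    obtain ⟨hP0, hProw, hPcol⟩ := hfeas lam hlam
    have hPle1 : ∀ u j, P lam u j ≤ 1 := by
      intro u j
      have h1 : P lam u j ≤ ∑ j', P lam u j' :=
        Finset.single_le_sum (fun j' _ => hP0 u j') (Finset.mem_univ j)
      rw [hProw u, hμ u] at h1
      have : (1:ℝ) / n ≤ 1 := by
        rw [div_le_one hnR]
        exact_mod_cast hn
      linarith
    -- bound inner products by S
    have habs : ∀ (A : Matrix (Fin n) (Fin m) ℝ), (∀ i j, 0 ≤ A i j) → (∀ i j, A i j ≤ 1) →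
        |∑ i, ∑ j, C i j * A i j| ≤ S := by
      intro A hA0 hA1
      calc |∑ i, ∑ j, C i j * A i j| ≤ ∑ i, |∑ j, C i j * A i j| :=
            Finset.abs_sum_le_sum_abs _ _
        _ ≤ ∑ i, ∑ j, |C i j * A i j| :=
            Finset.sum_le_sum fun i _ => Finset.abs_sum_le_sum_abs _ _
        _ ≤ S := by
            refine Finset.sum_le_sum fun i _ => Finset.sum_le_sum fun j _ => ?_
            rw [abs_mul]
            calc |C i j| * |A i j| ≤ |C i j| * 1 := by
                  refine mul_le_mul_of_nonneg_left ?_ (abs_nonneg _)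
                  rw [abs_of_nonneg (hA0 i j)]
                  exact hA1 i j
              _ = |C i j| := mul_one _
    have hCP := habs (P lam) hP0 hPle1
    have hCQ := habs Q hQ0 hQle1
    -- total mass of P and Q
    have hPsum : ∑ i, ∑ j, P lam i j = 1 := by
      have : ∑ i : Fin n, ∑ j, P lam i j = ∑ i : Fin n, μ i :=
        Finset.sum_congr rfl fun i _ => hProw i
      rw [this]
      have : ∑ i : Fin n, μ i = ∑ i : Fin n, (1:ℝ)/n :=
        Finset.sum_congr rfl fun i _ => hμ i
      rw [this, Finset.sum_const, Finset.card_univ, Fintype.card_fin, nsmul_eq_mul]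
      field_simp
    have hQsum : ∑ i, ∑ j, Q i j = 1 := by
      have : ∑ i : Fin n, ∑ j, Q i j = ∑ i : Fin n, μ i :=
        Finset.sum_congr rfl fun i _ => hQrow i
      rw [this]
      have : ∑ i : Fin n, μ i = ∑ i : Fin n, (1:ℝ)/n :=
        Finset.sum_congr rfl fun i _ => hμ i
      rw [this, Finset.sum_const, Finset.card_univ, Fintype.card_fin, nsmul_eq_mul]
      field_simp
    -- minimization inequality
    have hm := hmin lam hlam Q hQ0 hQrow hQcol
    -- E(Q) - E(P) = ∑∑ P log P - ∑∑ Q log Q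
    have hEP : -∑ i, ∑ j, P lam i j * (Real.log (P lam i j) - 1)
        = -(∑ i, ∑ j, P lam i j * Real.log (P lam i j)) + 1 := by
      have : ∀ i : Fin n, ∑ j, P lam i j * (Real.log (P lam i j) - 1)
          = ∑ j, P lam i j * Real.log (P lam i j) - ∑ j, P lam i j := by
        intro i
        rw [← Finset.sum_sub_distrib]
        exact Finset.sum_congr rfl fun j _ => by ring
      rw [Finset.sum_congr rfl fun i _ => this i, Finset.sum_sub_distrib, hPsum]
      ring
    have hEQ : -∑ i, ∑ j, Q i j * (Real.log (Q i j) - 1)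
        = -(∑ i, ∑ j, Q i j * Real.log (Q i j)) + 1 := by
      have : ∀ i : Fin n, ∑ j, Q i j * (Real.log (Q i j) - 1)
          = ∑ j, Q i j * Real.log (Q i j) - ∑ j, Q i j := by
        intro i
        rw [← Finset.sum_sub_distrib]
        exact Finset.sum_congr rfl fun j _ => by ring
      rw [Finset.sum_congr rfl fun i _ => this i, Finset.sum_sub_distrib, hQsum]
      ring
    -- KL decomposition
    set KL : ℝ := ∑ j, ∑ u, P lam u j * (Real.log (P lam u j) - Real.log (ν j / n))
      with hKLdef
    have hQlogQ : ∑ i, ∑ j, Q i j * Real.log (Q i j)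
        = ∑ j, ν j * Real.log (ν j / n) := by
      rw [Finset.sum_comm]
      refine Finset.sum_congr rfl fun j _ => ?_
      simp only [hQdef]
      rw [Finset.sum_const, Finset.card_univ, Fintype.card_fin, nsmul_eq_mul]
      field_simp
    have hKL : KL = ∑ i, ∑ j, P lam i j * Real.log (P lam i j)
        - ∑ i, ∑ j, Q i j * Real.log (Q i j) := by
      rw [hQlogQ, hKLdef]
      rw [show (∑ i, ∑ j, P lam i j * Real.log (P lam i j))
          = ∑ j, ∑ i, P lam i j * Real.log (P lam i j) from Finset.sum_comm ..]
      rw [← Finset.sum_sub_distrib]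
      refine Finset.sum_congr rfl fun j _ => ?_
      have hrep : ν j * Real.log (ν j / (n:ℝ)) = ∑ u, P lam u j * Real.log (ν j / (n:ℝ)) := by
        rw [← Finset.sum_mul, hPcol j]
      rw [hrep, ← Finset.sum_sub_distrib]
      exact Finset.sum_congr rfl fun u _ => by ring
    -- from hmin: lam * KL ≤ 2S
    have hlamKL : lam * KL ≤ 2 * S := by
      have h1 : lam * KL ≤ (∑ i, ∑ j, C i j * Q i j) - (∑ i, ∑ j, C i j * P lam i j) := by
        rw [hEP, hEQ] at hm
        rw [hKL]
        nlinarith [hm]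
      have h2 : (∑ i, ∑ j, C i j * Q i j) - (∑ i, ∑ j, C i j * P lam i j) ≤ 2 * S := by
        have := abs_le.mp hCP
        have := abs_le.mp hCQ
        linarith [(abs_le.mp hCP).1, (abs_le.mp hCQ).2]
      linarith
    -- each column contribution is nonnegative
    have hDj : ∀ j : Fin m, 0 ≤ ∑ u, P lam u j * (Real.log (P lam u j) - Real.log (ν j / n)) := by
      intro j
      refine D_nonneg (fun u => P lam u j) (fun u => hP0 u j) (ν j / n)
        (div_pos (hν j) hnR) ?_
      rw [hPcol j]
      field_simp
    have hDleKL : D lam ≤ KL := by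
      rw [hDdef, hKLdef]
      exact Finset.single_le_sum (fun j _ => hDj j) (Finset.mem_univ v)
    have hKLle : KL ≤ 2 * S / lam := by
      rw [le_div_iff₀ hlam]
      nlinarith [hlamKL]
    exact ⟨hDj v, le_trans hDleKL hKLle⟩
  -- the target function eventually equals log n - D lam / s
  have heq : ∀ᶠ lam in atTop,
      (-∑ u, (P lam u v / ν v) * Real.log (P lam u v / ν v))
        = Real.log n - D lam / s := by
    filter_upwards [eventually_gt_atTop 0] with lam hlam
    obtain ⟨hP0, hProw, hPcol⟩ := hfeas lam hlam
    exact entropy_eq hn (fun u => P lam u v) (fun u => hP0 u v) s hs (hPcol v)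
  -- squeeze
  have hDto0 : Tendsto (fun lam => D lam / s) atTop (nhds 0) := by
    have hupper : Tendsto (fun lam : ℝ => (2 * S / s) / lam) atTop (nhds 0) :=
      Tendsto.div_atTop tendsto_const_nhds tendsto_id
    refine tendsto_of_tendsto_of_tendsto_of_le_of_le' tendsto_const_nhds hupper ?_ ?_
    · filter_upwards [eventually_gt_atTop 0] with lam hlam
      exact div_nonneg (key lam hlam).1 hs.le
    · filter_upwards [eventually_gt_atTop 0] with lam hlam
      have h := (key lam hlam).2
      rw [div_div, div_le_div_iff₀ hs (by positivity : (0:ℝ) < s * lam)]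
      rw [le_div_iff₀ hlam] at h
      nlinarith [mul_le_mul_of_nonneg_right h hs.le]
  have hfinal : Tendsto (fun lam => Real.log (n:ℝ) - D lam / s) atTop
      (nhds (Real.log (n:ℝ) - 0)) := Tendsto.sub tendsto_const_nhds hDto0
  rw [sub_zero] at hfinal
  exact Tendsto.congr' (heq.mono fun lam h => h.symm) hfinal
end

section
/- Any matrix of the form P = diag(u) K diag(v) with u ∈ ℝ_{>0}^n, v ∈ ℝ_{>0}^m, and K_{ij} = exp(-C_{ij}/λ), that additionally satisfies the marginal constraints P𝟙_m = μ and Pᵀ𝟙_n = ν, is the unique minimizer of the entropic regularized OT problem. -/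
lemma ent_aux {a b : ℝ} (hb : 0 < b) (ha : 0 ≤ a) :
    0 ≤ a * (Real.log a - Real.log b) - a + b := by
  rcases eq_or_lt_of_le ha with h | h
  · rw [← h]; simp; linarith
  · have hlog : Real.log (b / a) ≤ b / a - 1 :=
      Real.log_le_sub_one_of_pos (div_pos hb h)
    rw [Real.log_div hb.ne' h.ne'] at hlog
    have h2 := mul_le_mul_of_nonneg_left hlog h.le
    have h3 : a * (b / a) = b := mul_div_cancel₀ b h.ne'
    nlinarith

lemma ent_aux_strict {a b : ℝ} (hb : 0 < b) (ha : 0 ≤ a) (hne : a ≠ b) :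
    0 < a * (Real.log a - Real.log b) - a + b := by
  rcases eq_or_lt_of_le ha with h | h
  · rw [← h]; simp
    rcases eq_or_lt_of_le hb.le with h' | h'
    · exact absurd (h.symm ▸ h') hne
    · linarith
  · have hne1 : b / a ≠ 1 := fun hc =>
      hne ((div_eq_one_iff_eq h.ne').mp hc).symm
    have hlog : Real.log (b / a) < b / a - 1 :=
      Real.log_lt_sub_one_of_pos (div_pos hb h) hne1
    rw [Real.log_div hb.ne' h.ne'] at hlog
    have h2 := mul_lt_mul_of_pos_left hlog h
    have h3 : a * (b / a) = b := mul_div_cancel₀ b h.ne'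
    nlinarith

/-- A feasible matrix of the scaling form `P i j = u i * K i j * v j`
with `K i j = exp (-C i j / λ)` is the unique minimizer of the entropic
regularized OT problem. -/
theorem scaling_form_is_unique_minimizer (n m : ℕ)
    (μ : Fin n → ℝ) (ν : Fin m → ℝ)
    (hμ : ∀ i, 0 < μ i) (hν : ∀ j, 0 < ν j)
    (hμ1 : ∑ i, μ i = 1) (hν1 : ∑ j, ν j = 1)
    (C : Matrix (Fin n) (Fin m) ℝ) (lam : ℝ) (hlam : 0 < lam)
    (u : Fin n → ℝ) (v : Fin m → ℝ) (hu : ∀ i, 0 < u i) (hv : ∀ j, 0 < v j)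
    (P : Matrix (Fin n) (Fin m) ℝ)
    (hPdef : ∀ i j, P i j = u i * Real.exp (-C i j / lam) * v j)
    (hProw : ∀ i, ∑ j, P i j = μ i) (hPcol : ∀ j, ∑ i, P i j = ν j) :
    ∀ Q : Matrix (Fin n) (Fin m) ℝ,
      (∀ i j, 0 ≤ Q i j) → (∀ i, ∑ j, Q i j = μ i) → (∀ j, ∑ i, Q i j = ν j) →
      ((∑ i, ∑ j, C i j * P i j) + lam * ∑ i, ∑ j, P i j * (Real.log (P i j) - 1)
          ≤ (∑ i, ∑ j, C i j * Q i j)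
            + lam * ∑ i, ∑ j, Q i j * (Real.log (Q i j) - 1)) ∧
      ((∑ i, ∑ j, C i j * P i j) + lam * ∑ i, ∑ j, P i j * (Real.log (P i j) - 1)
          = (∑ i, ∑ j, C i j * Q i j)
            + lam * ∑ i, ∑ j, Q i j * (Real.log (Q i j) - 1) → Q = P) := by
  intro Q hQpos hQrow hQcol
  have hPpos : ∀ i j, 0 < P i j := fun i j => by
    rw [hPdef]; exact mul_pos (mul_pos (hu i) (Real.exp_pos _)) (hv j)
  -- C in terms of log P
  have hC : ∀ i j, C i j
      = lam * (Real.log (u i) + Real.log (v j) - Real.log (P i j)) := by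
    intro i j
    have hlogP : Real.log (P i j)
        = Real.log (u i) + (-C i j / lam) + Real.log (v j) := by
      rw [hPdef, Real.log_mul (mul_pos (hu i) (Real.exp_pos _)).ne' (hv j).ne',
        Real.log_mul (hu i).ne' (Real.exp_pos _).ne', Real.log_exp]
    field_simp at hlogP ⊢
    linarith
  -- cost sum for any feasible R
  have hcost : ∀ R : Matrix (Fin n) (Fin m) ℝ,
      (∀ i, ∑ j, R i j = μ i) → (∀ j, ∑ i, R i j = ν j) →
      (∑ i, ∑ j, C i j * R i j)
        = lam * ((∑ i, Real.log (u i) * μ i) + (∑ j, Real.log (v j) * ν j)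
            - ∑ i, ∑ j, Real.log (P i j) * R i j) := by
    intro R hrow hcol
    have ha : ∑ i, ∑ j, Real.log (u i) * R i j = ∑ i, Real.log (u i) * μ i := by
      refine Finset.sum_congr rfl fun i _ => ?_
      rw [← Finset.mul_sum, hrow]
    have hb : ∑ i, ∑ j, Real.log (v j) * R i j = ∑ j, Real.log (v j) * ν j := by
      rw [Finset.sum_comm]
      refine Finset.sum_congr rfl fun j _ => ?_
      rw [← Finset.mul_sum, hcol]
    have e1 : ∀ i j, C i j * R i j
        = lam * (Real.log (u i) * R i j + Real.log (v j) * R i j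
            - Real.log (P i j) * R i j) := by
      intro i j; rw [hC]; ring
    calc ∑ i, ∑ j, C i j * R i j
        = ∑ i, ∑ j, lam * (Real.log (u i) * R i j + Real.log (v j) * R i j
            - Real.log (P i j) * R i j) := by
          exact Finset.sum_congr rfl fun i _ => Finset.sum_congr rfl fun j _ => e1 i j
      _ = lam * ∑ i, ∑ j, (Real.log (u i) * R i j + Real.log (v j) * R i j
            - Real.log (P i j) * R i j) := by
          simp only [← Finset.mul_sum]
      _ = lam * ((∑ i, ∑ j, Real.log (u i) * R i j)
            + (∑ i, ∑ j, Real.log (v j) * R i j)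
            - ∑ i, ∑ j, Real.log (P i j) * R i j) := by
          congr 1
          simp [Finset.sum_add_distrib, Finset.sum_sub_distrib]
      _ = _ := by rw [ha, hb]
  -- entropy expansion
  have hEnt : ∀ R : Matrix (Fin n) (Fin m) ℝ,
      ∑ i, ∑ j, R i j * (Real.log (R i j) - 1)
        = (∑ i, ∑ j, R i j * Real.log (R i j)) - ∑ i, ∑ j, R i j := by
    intro R
    simp [mul_sub, Finset.sum_sub_distrib]
  -- total masses
  have hQsum : ∑ i, ∑ j, Q i j = 1 := by
    simp only [hQrow]; exact hμ1
  have hPsum : ∑ i, ∑ j, P i j = 1 := by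
    simp only [hProw]; exact hμ1
  -- the divergence sum
  have hDval : ∑ i, ∑ j,
        (Q i j * (Real.log (Q i j) - Real.log (P i j)) - Q i j + P i j)
      = (∑ i, ∑ j, Q i j * Real.log (Q i j))
        - (∑ i, ∑ j, Real.log (P i j) * Q i j)
        - (∑ i, ∑ j, Q i j) + (∑ i, ∑ j, P i j) := by
    have e : ∀ i j, Q i j * (Real.log (Q i j) - Real.log (P i j)) - Q i j + P i j
        = (Q i j * Real.log (Q i j) - Real.log (P i j) * Q i j) - Q i j + P i j := by
      intro i j; ring
    simp only [e]
    simp [Finset.sum_add_distrib, Finset.sum_sub_distrib]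
  have hD : ∀ x : ℝ, x = x := fun x => rfl
  have hDnonneg : 0 ≤ ∑ i, ∑ j,
      (Q i j * (Real.log (Q i j) - Real.log (P i j)) - Q i j + P i j) := by
    refine Finset.sum_nonneg fun i _ => Finset.sum_nonneg fun j _ => ?_
    exact ent_aux (hPpos i j) (hQpos i j)
  -- key identity: F(Q) - F(P) = lam * D
  have key : ((∑ i, ∑ j, C i j * Q i j)
        + lam * ∑ i, ∑ j, Q i j * (Real.log (Q i j) - 1))
      - ((∑ i, ∑ j, C i j * P i j)
        + lam * ∑ i, ∑ j, P i j * (Real.log (P i j) - 1)) = lam * ∑ i, ∑ j,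
      (Q i j * (Real.log (Q i j) - Real.log (P i j)) - Q i j + P i j) := by
    rw [hcost Q hQrow hQcol, hcost P hProw hPcol, hEnt Q, hEnt P, hDval,
      hQsum, hPsum]
    have hPlog : ∑ i, ∑ j, P i j * Real.log (P i j)
        = ∑ i, ∑ j, Real.log (P i j) * P i j := by
      exact Finset.sum_congr rfl fun i _ => Finset.sum_congr rfl fun j _ =>
        mul_comm _ _
    rw [hPlog]
    ring
  constructor
  · nlinarith [mul_nonneg hlam.le hDnonneg]
  · intro heq
    have hD0 : ∑ i, ∑ j,
        (Q i j * (Real.log (Q i j) - Real.log (P i j)) - Q i j + P i j) = 0 := by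
      have : lam * ∑ i, ∑ j,
          (Q i j * (Real.log (Q i j) - Real.log (P i j)) - Q i j + P i j) = 0 := by
        linarith
      exact (mul_eq_zero.mp this).resolve_left hlam.ne'
    have hterm : ∀ i ∈ Finset.univ, ∀ j ∈ (Finset.univ : Finset (Fin m)),
        Q i j * (Real.log (Q i j) - Real.log (P i j)) - Q i j + P i j = 0 := by
      have h1 := (Finset.sum_eq_zero_iff_of_nonneg
        (fun i _ => Finset.sum_nonneg fun j _ =>
          ent_aux (hPpos i j) (hQpos i j))).mp hD0
      intro i hi j hj
      exact (Finset.sum_eq_zero_iff_of_nonneg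
        (fun j _ => ent_aux (hPpos i j) (hQpos i j))).mp (h1 i hi) j hj
    ext i j
    by_contra hne
    have := ent_aux_strict (hPpos i j) (hQpos i j) hne
    rw [hterm i (Finset.mem_univ i) j (Finset.mem_univ j)] at this
    exact lt_irrefl 0 this
end
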